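/- arXiv:1701.00388 — 3 statements merged into one kernel-verified Lean document; each statement's English description precedes it below -/
import Mathlib

section
/- For every positive integer $k$, $\sum_{n=1}^{\infty} \frac{H_n}{n(n+k)} = \frac{1}{k}\left( \frac{1}{2}H_k^2 + \frac{1}{2}\zeta_k(2) + \zeta(2) - \frac{H_k}{k} \right)$. -/
noncomputable def H (n : ℕ) : ℝ := ∑ j ∈ Finset.Icc 1 n, (1 : ℝ) / j

noncomputable def zh (m n : ℕ) : ℝ := ∑ j ∈ Finset.Icc 1 n, (1 : ℝ) / (j : ℝ) ^ m

/-!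
Write `H (n + 1) = ∑_{j ≤ n} 1/(j+1)` and exchange the order of summation (all terms are
nonnegative): the series becomes `∑_j 1/(j+1) · ∑_{n ≥ j} 1/((n+1)(n+1+k))`. The inner tail
telescopes through `1/(x(x+k)) = (1/x - 1/(x+k))/k` to `(1/k) ∑_{m<k} 1/(j+1+m)`, so the series
equals `(1/k) ∑_{m<k} ∑_j 1/((j+1)(j+1+m))`. The `m = 0` term is `ζ(2)`, the others are `H_m/m`
(telescoping again), and `∑_{m=1}^{K} H_m/m = (H_K² + ζ_K(2))/2`.
-/

open Finset Filter Topology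

lemma H_succ (n : ℕ) : H (n + 1) = H n + 1 / ((n : ℝ) + 1) := by
  rw [H, sum_Icc_succ_top (Nat.le_add_left 1 n)]
  push_cast
  rfl

lemma zh_two_succ (n : ℕ) : zh 2 (n + 1) = zh 2 n + 1 / ((n : ℝ) + 1) ^ 2 := by
  rw [zh, sum_Icc_succ_top (Nat.le_add_left 1 n)]
  push_cast
  rfl

lemma H_eq_sum_range (n : ℕ) : H n = ∑ j ∈ range n, 1 / ((j : ℝ) + 1) := by
  induction n with
  | zero => simp [H]
  | succ n ih => rw [H_succ, sum_range_succ, ih]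

lemma sum_range_H_succ_div (N : ℕ) :
    ∑ m ∈ range N, H (m + 1) / ((m : ℝ) + 1) = (H N ^ 2 + zh 2 N) / 2 := by
  induction N with
  | zero => simp [H, zh]
  | succ N ih =>
    rw [sum_range_succ, ih, H_succ, zh_two_succ]
    field_simp
    ring

lemma Antitone.hasSum_sub_succ {g : ℕ → ℝ} (hg : Antitone g) (hlim : Tendsto g atTop (𝓝 0)) :
    HasSum (fun n => g n - g (n + 1)) (g 0) := by
  rw [hasSum_iff_tendsto_nat_of_nonneg fun n => sub_nonneg.2 (hg n.le_succ)]
  simp_rw [sum_range_sub']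
  simpa using tendsto_const_nhds.sub hlim

lemma Antitone.hasSum_sub_add {g : ℕ → ℝ} (hg : Antitone g) (hlim : Tendsto g atTop (𝓝 0))
    (k : ℕ) : HasSum (fun n => g n - g (n + k)) (∑ i ∈ range k, g i) := by
  induction k with
  | zero => simp
  | succ k ih =>
    have hshift : HasSum (fun n => g (n + k) - g (n + 1 + k)) (g k) := by
      simpa using Antitone.hasSum_sub_succ (g := fun n => g (n + k))
        (fun a b hab => hg (by omega)) (hlim.comp (tendsto_add_atTop_nat k))
    rw [sum_range_succ]
    convert ih.add hshift using 2 with n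
    rw [add_right_comm n 1 k, ← add_assoc]
    ring

lemma hasSum_one_div_add_mul_add_add {c : ℝ} (hc : 0 < c) {k : ℕ} (hk : 0 < k) :
    HasSum (fun n : ℕ => 1 / (((n : ℝ) + c) * ((n : ℝ) + c + k)))
      ((1 / (k : ℝ)) * ∑ m ∈ range k, 1 / ((m : ℝ) + c)) := by
  have hanti : Antitone fun n : ℕ => 1 / ((n : ℝ) + c) := fun a b hab =>
    one_div_le_one_div_of_le (by positivity) (by gcongr)
  have hlim : Tendsto (fun n : ℕ => 1 / ((n : ℝ) + c)) atTop (𝓝 0) := by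
    simp only [one_div]
    exact (tendsto_atTop_add_const_right _ c tendsto_natCast_atTop_atTop).inv_tendsto_atTop
  have hpartial (n : ℕ) : 1 / (((n : ℝ) + c) * ((n : ℝ) + c + k)) =
      1 / (k : ℝ) * (1 / ((n : ℝ) + c) - 1 / (((n + k : ℕ) : ℝ) + c)) := by
    have hk' : (0 : ℝ) < k := by exact_mod_cast hk
    push_cast
    field_simp
    ring
  simpa only [hpartial] using (hanti.hasSum_sub_add hlim k).mul_left (1 / (k : ℝ))

lemma hasSum_one_div_succ_sq : HasSum (fun n : ℕ => 1 / ((n : ℝ) + 1) ^ 2) (Real.pi ^ 2 / 6) := by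
  simpa using (hasSum_nat_add_iff' 1).mpr hasSum_zeta_two

lemma hasSum_one_div_succ_mul_succ_add {m : ℕ} (hm : 0 < m) :
    HasSum (fun j : ℕ => 1 / (((j : ℝ) + 1) * ((j : ℝ) + 1 + m))) (H m / m) := by
  simpa [H_eq_sum_range, div_eq_inv_mul, add_comm] using hasSum_one_div_add_mul_add_add one_pos hm

lemma summable_one_div_succ_mul_succ_add (m : ℕ) :
    Summable fun j : ℕ => 1 / (((j : ℝ) + 1) * ((j : ℝ) + 1 + m)) := by
  rcases m.eq_zero_or_pos with rfl | hm
  · simpa [sq] using hasSum_one_div_succ_sq.summable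
  · exact (hasSum_one_div_succ_mul_succ_add hm).summable

lemma tsum_sum_range_mul_eq_tsum_mul_tsum_nat_add {a b : ℕ → ℝ} (ha : 0 ≤ a) (hb : 0 ≤ b)
    (hb_sum : Summable b) (hsum : Summable fun j => a j * ∑' n, b (n + j)) :
    ∑' n, (∑ j ∈ range (n + 1), a j) * b n = ∑' j, a j * ∑' n, b (n + j) := by
  set f : ℕ → ℕ → ℝ := fun j n => if j ≤ n then a j * b n else 0
  have hrow (j : ℕ) : HasSum (f j) (a j * ∑' n, b (n + j)) := by
    refine (hasSum_nat_add_iff' j).mp ?_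
    have hzero : ∑ i ∈ range j, f j i = 0 :=
      sum_eq_zero fun i hi => if_neg (by simpa using hi)
    simpa [f, hzero] using (((summable_nat_add_iff j).mpr hb_sum).hasSum.mul_left (a j))
  have hcol (n : ℕ) : ∑' j, f j n = (∑ j ∈ range (n + 1), a j) * b n := by
    rw [tsum_eq_sum (s := range (n + 1)) fun j hj => if_neg (by simpa [Nat.lt_succ_iff] using hj),
      sum_mul]
    exact sum_congr rfl fun j hj => if_pos (by simpa [Nat.lt_succ_iff] using hj)
  have hf : Summable (Function.uncurry f) := by
    refine (summable_prod_of_nonneg fun ⟨j, n⟩ => ?_).mpr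
      ⟨fun j => (hrow j).summable, hsum.congr fun j => (hrow j).tsum_eq.symm⟩
    by_cases h : j ≤ n <;> simp [f, h, mul_nonneg (ha j) (hb n)]
  calc ∑' n, (∑ j ∈ range (n + 1), a j) * b n = ∑' n, ∑' j, f j n :=
        tsum_congr fun n => (hcol n).symm
    _ = ∑' j, ∑' n, f j n := hf.tsum_comm
    _ = ∑' j, a j * ∑' n, b (n + j) := tsum_congr fun j => (hrow j).tsum_eq

lemma one_div_succ_mul_tsum_nat_add {k : ℕ} (hk : 0 < k) (j : ℕ) :
    1 / ((j : ℝ) + 1) * ∑' n : ℕ, 1 / ((((n + j : ℕ) : ℝ) + 1) * (((n + j : ℕ) : ℝ) + 1 + k)) =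
      1 / (k : ℝ) * ∑ m ∈ range k, 1 / (((j : ℝ) + 1) * ((j : ℝ) + 1 + m)) := by
  have htail := (hasSum_one_div_add_mul_add_add (c := (j : ℝ) + 1) (by positivity) hk).tsum_eq
  push_cast
  simp_rw [add_assoc _ (j : ℝ) 1, htail, mul_sum]
  refine sum_congr rfl fun m _ => ?_
  field_simp
  ring

lemma sum_range_succ_tsum_one_div_succ_mul_succ_add (K : ℕ) :
    ∑ m ∈ range (K + 1), ∑' j : ℕ, 1 / (((j : ℝ) + 1) * ((j : ℝ) + 1 + m)) =
      (H K ^ 2 + zh 2 K) / 2 + Real.pi ^ 2 / 6 := by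
  rw [sum_range_succ', ← sum_range_H_succ_div]
  congr 1
  · refine sum_congr rfl fun m _ => ?_
    exact_mod_cast (hasSum_one_div_succ_mul_succ_add m.succ_pos).tsum_eq
  · simpa [sq] using hasSum_one_div_succ_sq.tsum_eq

theorem stmt0 (k : ℕ) (hk : 0 < k) :
    ∑' n : ℕ, H (n + 1) / (((n : ℝ) + 1) * ((n : ℝ) + 1 + k)) =
      (1 / (k : ℝ)) * (H k ^ 2 / 2 + zh 2 k / 2 + Real.pi ^ 2 / 6 - H k / k) := by
  have hrows (m : ℕ) (_ : m ∈ range k) :=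
    (summable_one_div_succ_mul_succ_add m).mul_left (1 / (k : ℝ))
  calc ∑' n : ℕ, H (n + 1) / (((n : ℝ) + 1) * ((n : ℝ) + 1 + k))
      = ∑' n : ℕ, (∑ j ∈ range (n + 1), 1 / ((j : ℝ) + 1)) *
          (1 / (((n : ℝ) + 1) * ((n : ℝ) + 1 + k))) := by
        simp_rw [← H_eq_sum_range, div_eq_mul_one_div (H _)]
    _ = ∑' j : ℕ, 1 / ((j : ℝ) + 1) *
          ∑' n : ℕ, 1 / ((((n + j : ℕ) : ℝ) + 1) * (((n + j : ℕ) : ℝ) + 1 + k)) := by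
        refine tsum_sum_range_mul_eq_tsum_mul_tsum_nat_add (fun j => by positivity)
          (fun n => by positivity) (summable_one_div_succ_mul_succ_add k) ?_
        simp_rw [one_div_succ_mul_tsum_nat_add hk, mul_sum]
        exact summable_sum hrows
    _ = 1 / (k : ℝ) * ∑ m ∈ range k, ∑' j : ℕ, 1 / (((j : ℝ) + 1) * ((j : ℝ) + 1 + m)) := by
        simp_rw [one_div_succ_mul_tsum_nat_add hk, mul_sum]
        rw [Summable.tsum_finsetSum hrows]
        simp_rw [tsum_mul_left]
    _ = _ := by
        obtain ⟨K, rfl⟩ := Nat.exists_eq_add_of_le' hk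
        rw [sum_range_succ_tsum_one_div_succ_mul_succ_add, H_succ, zh_two_succ]
        push_cast
        field_simp
        ring
end

section
/- For every positive integer $k$, $\sum_{n=1}^{\infty} \frac{\zeta_n(2)}{n(n+k)} = \frac{1}{k}\left\{ \zeta(3) + \zeta(2) H_{k-1} - \sum_{i=1}^{k-1} \frac{H_i}{i^2} \right\}$. -/
noncomputable def Z (s : ℕ) : ℝ := ∑' n : ℕ, 1 / ((n : ℝ) + 1) ^ s

open Finset Filter Topology

lemma Finset.sum_range_sub_shift {M : Type*} [AddCommGroup M] (f : ℕ → M) (k N : ℕ) :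
    ∑ n ∈ range N, (f n - f (n + k)) = ∑ i ∈ range k, f i - ∑ i ∈ range k, f (N + i) := by
  have h₁ := sum_range_add f N k
  have h₂ := sum_range_add f k N
  rw [add_comm k N] at h₂
  simp only [sum_sub_distrib, add_comm _ k, sub_eq_sub_iff_add_eq_add]
  rw [← h₁, h₂]

lemma hasSum_sub_shift_of_antitone {f : ℕ → ℝ} (hf : Antitone f) (h0 : Tendsto f atTop (𝓝 0))
    (k : ℕ) : HasSum (fun n => f n - f (n + k)) (∑ i ∈ range k, f i) := by
  rw [hasSum_iff_tendsto_nat_of_nonneg fun n => sub_nonneg.2 (hf (Nat.le_add_right n k))]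
  simp only [Finset.sum_range_sub_shift]
  have htail : Tendsto (fun N => ∑ i ∈ range k, f (N + i)) atTop (𝓝 0) := by
    simpa using tendsto_finsetSum (range k) fun i _ => h0.comp (tendsto_add_atTop_nat i)
  simpa using tendsto_const_nhds.sub htail

lemma hasSum_sum_range_mul_of_nonneg {a b t : ℕ → ℝ} {s : ℝ} (ha : 0 ≤ a) (hb : 0 ≤ b)
    (ht : ∀ j, HasSum (fun n => b (n + j)) (t j)) (hs : HasSum (fun j => a j * t j) s) :
    HasSum (fun n => (∑ j ∈ range (n + 1), a j) * b n) s := by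
  obtain ⟨F, hF⟩ : ∃ F : ℕ × ℕ → ℝ, ∀ p, F p = if p.1 ≤ p.2 then a p.1 * b p.2 else 0 :=
    ⟨_, fun _ => rfl⟩
  have hF0 : 0 ≤ F := fun p => by
    rw [hF]
    split_ifs
    exacts [mul_nonneg (ha _) (hb _), le_rfl]
  have hcol : ∀ j, HasSum (fun n => F (j, n)) (a j * t j) := fun j => by
    have h := (hasSum_nat_add_iff (f := fun n => F (j, n)) j).1 <| ((ht j).mul_left (a j)).congr_fun
      fun n => by simp [hF]
    rwa [sum_eq_zero fun i hi => by simp [hF, Nat.not_le.2 (mem_range.1 hi)], add_zero] at h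
  have hrow : ∀ n, HasSum (fun j => F (j, n)) ((∑ j ∈ range (n + 1), a j) * b n) := fun n => by
    rw [sum_mul]
    convert hasSum_sum_of_ne_finset_zero (L := SummationFilter.unconditional ℕ)
      (s := range (n + 1)) (f := fun j => F (j, n))
      (fun j hj => by simp [hF, Nat.lt_succ_iff.not.1 (mem_range.not.1 hj)]) using 1
    exact sum_congr rfl fun j hj => by simp [hF, Nat.lt_succ_iff.1 (mem_range.1 hj)]
  have hFsum : Summable F :=
    (summable_prod_of_nonneg hF0).2 ⟨fun j => (hcol j).summable, by
      simpa only [(hcol _).tsum_eq] using hs.summable⟩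
  have hswap : HasSum (fun p : ℕ × ℕ => F p.swap) (∑' p, F p) :=
    (Equiv.prodComm ℕ ℕ).hasSum_iff.2 hFsum.hasSum
  rw [hs.unique (hFsum.hasSum.prod_fiberwise hcol)]
  exact hswap.prod_fiberwise hrow

lemma Finset.sum_Icc_one_eq_sum_range {M : Type*} [AddCommMonoid M] (f : ℕ → M) (n : ℕ) :
    ∑ j ∈ Icc 1 n, f j = ∑ j ∈ range n, f (j + 1) := by
  rw [← Ico_add_one_right_eq_Icc, sum_Ico_eq_sum_range, add_tsub_cancel_right]
  simp only [add_comm 1]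

lemma zh_eq_sum_range (m n : ℕ) : zh m n = ∑ j ∈ range n, 1 / ((j : ℝ) + 1) ^ m := by
  simp [zh, sum_Icc_one_eq_sum_range]

lemma hasSum_Z {s : ℕ} (hs : 1 < s) : HasSum (fun n : ℕ => 1 / ((n : ℝ) + 1) ^ s) (Z s) := by
  refine Summable.hasSum ?_
  exact_mod_cast (summable_nat_add_iff 1).2 (Real.summable_one_div_nat_pow.2 hs)

lemma antitone_one_div_add_one : Antitone fun n : ℕ => 1 / ((n : ℝ) + 1) :=
  fun _ _ h => one_div_le_one_div_of_le (by positivity) (by gcongr)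

lemma hasSum_one_div_mul_add (k : ℕ) (hk : 0 < k) :
    HasSum (fun n : ℕ => 1 / (((n : ℝ) + 1) * ((n : ℝ) + 1 + k))) (H k / k) := by
  have h := (hasSum_sub_shift_of_antitone antitone_one_div_add_one
    tendsto_one_div_add_atTop_nhds_zero_nat k).div_const k
  rw [← H_eq_sum_range] at h
  refine h.congr_fun fun n => ?_
  have : (k : ℝ) ≠ 0 := by positivity
  push_cast
  field_simp
  ring

noncomputable def sqShiftSum (i : ℕ) : ℝ := ∑' j : ℕ, 1 / (((j : ℝ) + 1) ^ 2 * ((j : ℝ) + 1 + i))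

lemma summable_sqShiftSum (i : ℕ) :
    Summable fun j : ℕ => 1 / (((j : ℝ) + 1) ^ 2 * ((j : ℝ) + 1 + i)) := by
  refine (hasSum_Z one_lt_two).summable.of_nonneg_of_le (fun _ => by positivity) fun j => ?_
  gcongr
  nlinarith [(by positivity : (0 : ℝ) ≤ j), (by positivity : (0 : ℝ) ≤ i)]

lemma sqShiftSum_zero : sqShiftSum 0 = Z 3 := by
  simp only [sqShiftSum, Z, Nat.cast_zero, add_zero, ← pow_succ]

lemma sqShiftSum_of_pos {i : ℕ} (hi : 0 < i) : sqShiftSum i = Z 2 / i - H i / i ^ 2 := by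
  have h := ((hasSum_Z one_lt_two).div_const i).sub ((hasSum_one_div_mul_add i hi).div_const i)
  rw [sqShiftSum, (h.congr_fun fun j => ?_).tsum_eq]
  · ring
  have : (i : ℝ) ≠ 0 := by positivity
  field_simp
  ring

lemma sum_range_sqShiftSum (k : ℕ) : ∑ i ∈ range (k + 1), sqShiftSum i
    = Z 3 + Z 2 * H k - ∑ i ∈ Icc 1 k, H i / (i : ℝ) ^ 2 := by
  induction k with
  | zero => simp [sqShiftSum_zero, H]
  | succ k ih =>
    rw [sum_range_succ, ih, sqShiftSum_of_pos k.succ_pos, sum_Icc_succ_top (by omega), H_succ]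
    push_cast
    ring

lemma hasSum_zh_two_mul_sub_shift (k : ℕ) :
    HasSum (fun n : ℕ => zh 2 (n + 1) * (1 / ((n : ℝ) + 1) - 1 / ((n : ℝ) + 1 + k)))
      (∑ i ∈ range k, sqShiftSum i) := by
  set f : ℕ → ℝ := fun m => 1 / ((m : ℝ) + 1) with hf
  have htail : ∀ j, HasSum (fun n => f (n + j) - f (n + j + k)) (∑ i ∈ range k, f (i + j)) := by
    intro j
    have hanti : Antitone fun m => f (m + j) :=
      antitone_one_div_add_one.comp_monotone (add_left_mono (a := j))
    have hlim := (tendsto_one_div_add_atTop_nhds_zero_nat (𝕜 := ℝ)).comp (tendsto_add_atTop_nat j)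
    simpa only [add_right_comm _ k j] using hasSum_sub_shift_of_antitone hanti hlim k
  have hrows : HasSum (fun j : ℕ => 1 / ((j : ℝ) + 1) ^ 2 * ∑ i ∈ range k, f (i + j))
      (∑ i ∈ range k, sqShiftSum i) := by
    refine (hasSum_sum fun i _ => (summable_sqShiftSum i).hasSum).congr_fun fun j => ?_
    rw [mul_sum]
    refine sum_congr rfl fun i _ => ?_
    simp only [hf]
    push_cast
    field_simp
    ring
  refine (hasSum_sum_range_mul_of_nonneg (fun _ => by positivity)
    (fun n => sub_nonneg.2 (antitone_one_div_add_one (Nat.le_add_right n k))) htail hrows).congr_fun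
    fun n => ?_
  simp only [zh_eq_sum_range]
  push_cast
  ring

theorem stmt2 (k : ℕ) (hk : 0 < k) :
    ∑' n : ℕ, zh 2 (n + 1) / (((n : ℝ) + 1) * ((n : ℝ) + 1 + k)) =
      (1 / (k : ℝ)) *
        (Z 3 + Z 2 * H (k - 1) - ∑ i ∈ Finset.Icc 1 (k - 1), H i / (i : ℝ) ^ 2) := by
  obtain ⟨m, rfl⟩ := Nat.exists_eq_add_one_of_ne_zero hk.ne'
  rw [Nat.add_sub_cancel, ← sum_range_sqShiftSum, ← (hasSum_zh_two_mul_sub_shift (m + 1)).tsum_eq,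
    ← tsum_mul_left]
  refine tsum_congr fun n => ?_
  field_simp
  ring
end

section
/- For integers $n \geq 1$ and $k \geq 0$, $\int_0^1 t^{n-1}\ln^k(1-t)\,dt = (-1)^k \frac{Y_k(n)}{n}$, where $Y_k(n)$ is defined recursively by $Y_0(n) = 1$ and $Y_k(n) = k\sum_{m=1}^n \frac{Y_{k-1}(m)}{m}$. -/
/-!
Integrate by parts against the antiderivative `(t ^ (m + 1) - 1) / (m + 1)` of `t ^ m`: it vanishes
at `t = 1`, where it tames the singularity of `log (1 - t) ^ (k + 1)`, and the resulting factor
`(1 - t ^ (m + 1)) / (1 - t) = ∑_{i ≤ m} tⁱ` gives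
`I(m, k + 1) = -(k + 1) / (m + 1) * ∑_{i ≤ m} I(i, k)` for `I(m, k) = ∫₀¹ tᵐ log (1 - t) ^ k`,
which is the recursion defining `Y` up to the sign `(-1) ^ k` and the shift `n = m + 1`.
Integrability comes from `|log t| ^ k ≤ 2 ^ k k! t ^ (-1/2)` on `(0, 1]`.
-/

noncomputable def Y : ℕ → ℕ → ℝ
  | 0, _ => 1
  | k + 1, n => ((k : ℝ) + 1) * ∑ m ∈ Finset.Icc 1 n, Y k m / m

open Real Set Filter Topology MeasureTheory intervalIntegral
open scoped Nat

theorem Real.continuousOn_mul_log_pow (k : ℕ) :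
    ContinuousOn (fun x : ℝ => x * log x ^ k) (Ici 0) := by
  rcases Nat.eq_zero_or_pos k with rfl | hk
  · simp only [pow_zero, mul_one]
    exact continuousOn_id
  -- with `y = x ^ (1/k)`, `x * log x ^ k = k ^ k * (y * log y) ^ k`
  have hcont : Continuous fun x : ℝ => (k : ℝ) ^ k * (x ^ (1 / k : ℝ) * log (x ^ (1 / k : ℝ))) ^ k :=
    (continuous_mul_log.comp (continuous_rpow_const (by positivity))).pow k |>.const_mul _
  refine hcont.continuousOn.congr fun x (hx : 0 ≤ x) => ?_
  dsimp only
  rcases hx.eq_or_lt with rfl | hx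
  · simp [hk.ne']
  have hk' : (k : ℝ) ≠ 0 := by positivity
  rw [log_rpow hx, mul_pow, ← rpow_natCast (x ^ _), ← rpow_mul hx.le, one_div_mul_cancel hk', rpow_one]
  field_simp
  rw [div_pow, mul_div_cancel₀ _ (pow_ne_zero k hk')]

theorem Real.abs_log_pow_le_rpow_neg (k : ℕ) {t ε : ℝ} (ht₀ : 0 < t) (ht₁ : t ≤ 1) (hε : 0 < ε) :
    |log t| ^ k ≤ k ! / ε ^ k * t ^ (-ε) := by
  have hlog : 0 ≤ -log t := neg_nonneg.2 (log_nonpos ht₀.le ht₁)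
  have h := pow_div_factorial_le_exp _ (mul_nonneg hε.le hlog) k
  rw [div_le_iff₀ (by positivity), mul_pow] at h
  rw [rpow_def_of_pos ht₀, abs_of_nonpos (log_nonpos ht₀.le ht₁),
    show log t * -ε = ε * -log t by ring, div_mul_eq_mul_div, le_div_iff₀ (by positivity)]
  linarith

theorem intervalIntegrable_log_pow (k : ℕ) :
    IntervalIntegrable (fun t => log t ^ k) volume 0 1 := by
  have hdom : IntervalIntegrable (fun t : ℝ => k ! / (1 / 2) ^ k * t ^ (-(1 / 2) : ℝ)) volume 0 1 :=
    (intervalIntegrable_rpow' (by norm_num)).const_mul _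
  refine hdom.mono_fun (measurable_log.pow_const k).aestronglyMeasurable.restrict ?_
  rw [uIoc_of_le zero_le_one]
  refine (ae_restrict_iff' measurableSet_Ioc).2 (ae_of_all _ fun t ⟨ht₀, ht₁⟩ => ?_)
  dsimp only
  rw [norm_pow, norm_eq_abs, norm_of_nonneg (by positivity)]
  exact abs_log_pow_le_rpow_neg k ht₀ ht₁ (by norm_num)

theorem intervalIntegrable_pow_mul_log_one_sub_pow (m k : ℕ) :
    IntervalIntegrable (fun t : ℝ => t ^ m * log (1 - t) ^ k) volume 0 1 := by
  have h := (intervalIntegrable_log_pow k).symm.comp_sub_left 1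
  rw [sub_self, sub_zero] at h
  exact h.continuousOn_mul (continuous_pow m).continuousOn

theorem continuousOn_pow_sub_one_mul_log_one_sub_pow (n k : ℕ) :
    ContinuousOn (fun t : ℝ => (t ^ n - 1) * log (1 - t) ^ k) (Icc 0 1) := by
  have hfactor : (fun t : ℝ => (t ^ n - 1) * log (1 - t) ^ k) =
      fun t => -(∑ i ∈ Finset.range n, t ^ i) * ((1 - t) * log (1 - t) ^ k) := by
    funext t
    rw [← geom_sum_mul]
    ring
  rw [hfactor]
  refine (continuous_finsetSum _ fun i _ => continuous_pow i).neg.continuousOn.mul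
    ((continuousOn_mul_log_pow k).comp (continuousOn_const.sub continuousOn_id) ?_)
  exact fun t ht => sub_nonneg.2 ht.2

theorem hasDerivAt_pow_sub_one_mul_log_one_sub_pow_div (m k : ℕ) {t : ℝ} (ht : t < 1) :
    HasDerivAt (fun t : ℝ => (t ^ (m + 1) - 1) * log (1 - t) ^ (k + 1) / (m + 1))
      (t ^ m * log (1 - t) ^ (k + 1) +
        (k + 1) / (m + 1) * ∑ i ∈ Finset.range (m + 1), t ^ i * log (1 - t) ^ k) t := by
  have h1t : 1 - t ≠ 0 := sub_ne_zero.2 ht.ne'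
  have hpow := (hasDerivAt_pow (m + 1) t).sub_const 1
  have hlog := (((hasDerivAt_id t).const_sub 1).log h1t).pow (k + 1)
  refine ((hpow.mul hlog).div_const ((m : ℝ) + 1)).congr_deriv ?_
  simp only [id, Pi.pow_apply, Nat.add_sub_cancel, Nat.cast_add, Nat.cast_one]
  rw [← Finset.sum_mul, ← geom_sum_mul t (m + 1)]
  field_simp
  ring

theorem integral_pow_mul_log_one_sub_pow_succ (m k : ℕ) :
    ∫ t in (0 : ℝ)..1, t ^ m * log (1 - t) ^ (k + 1) =
      -((k + 1) / (m + 1) *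
        ∑ i ∈ Finset.range (m + 1), ∫ t in (0 : ℝ)..1, t ^ i * log (1 - t) ^ k) := by
  have hint := intervalIntegrable_pow_mul_log_one_sub_pow
  have hsum : IntervalIntegrable
      (fun t : ℝ => ∑ i ∈ Finset.range (m + 1), t ^ i * log (1 - t) ^ k) volume 0 1 := by
    simpa only [Finset.sum_fn] using IntervalIntegrable.sum _ fun i _ => hint i k
  have hFTC := integral_eq_sub_of_hasDerivAt_of_le zero_le_one
    ((continuousOn_pow_sub_one_mul_log_one_sub_pow (m + 1) (k + 1)).div_const ((m : ℝ) + 1))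
    (fun t ht => hasDerivAt_pow_sub_one_mul_log_one_sub_pow_div m k ht.2)
    ((hint m (k + 1)).add (hsum.const_mul _))
  rw [integral_add (hint m (k + 1)) (hsum.const_mul _), intervalIntegral.integral_const_mul,
    integral_finsetSum fun i _ => hint i k] at hFTC
  simp only [one_pow, sub_self, log_zero, log_one, ne_eq, Nat.add_eq_zero_iff, one_ne_zero,
    and_false, not_false_eq_true, zero_pow, mul_zero, zero_div, zero_sub, sub_zero] at hFTC
  linarith

theorem Y_succ (k n : ℕ) :
    Y (k + 1) n = (k + 1) * ∑ i ∈ Finset.range n, Y k (i + 1) / (i + 1) := by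
  rw [Y, ← Finset.Ico_add_one_right_eq_Icc, Finset.sum_Ico_eq_sum_range, Nat.add_sub_cancel]
  simp only [add_comm 1, Nat.cast_add, Nat.cast_one]

theorem integral_pow_mul_log_one_sub_pow (m k : ℕ) :
    ∫ t in (0 : ℝ)..1, t ^ m * log (1 - t) ^ k = (-1) ^ k * Y k (m + 1) / (m + 1) := by
  induction k generalizing m with
  | zero => simp [Y, integral_pow]
  | succ k ih =>
    simp only [integral_pow_mul_log_one_sub_pow_succ, ih, Y_succ,
      ← Finset.mul_sum, mul_div_assoc]
    ring

theorem stmt12 (n k : ℕ) (hn : 1 ≤ n) :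
    ∫ t in (0 : ℝ)..1, t ^ (n - 1) * (Real.log (1 - t)) ^ k = (-1 : ℝ) ^ k * Y k n / n := by
  obtain ⟨m, rfl⟩ := Nat.exists_eq_add_of_le' hn
  simpa using integral_pow_mul_log_one_sub_pow m k
end
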